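/- arXiv:1509.09267 — 5 statements merged into one kernel-verified Lean document; each statement's English description precedes it below -/
import Mathlib

section
/- The inverse limit of the system A = (A_f, p_{fg}, ℕ^ℕ), where A_f = ⊕_{i∈ℕ} ℤ^{f(i)+1} (finitely supported functions on I_f in the first coordinate) with restriction bonding maps, is isomorphic to the group ⊕_{i∈ℕ} ∏_{j∈ℕ} ℤ of functions φ : ℕ×ℕ → ℤ whose support is contained in F × ℕ for some finite F ⊆ ℕ. -/
/-- `I_f = {(i,j) : j ≤ f(i)}`. -/
def IFun (f : ℕ → ℕ) : Set (ℕ × ℕ) := {p | p.2 ≤ f p.1}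

/-- The group of all functions `I_f → ℤ`. -/
abbrev BGrp (f : ℕ → ℕ) : Type := (IFun f) → ℤ

/-- `A_f = ⊕_i ℤ^{f(i)+1}`: the subgroup of functions `I_f → ℤ` nonzero in only
finitely many first coordinates. -/
def AGrp (f : ℕ → ℕ) : AddSubgroup (BGrp f) where
  carrier := {x | {i : ℕ | ∃ j : ℕ, ∃ h : (i, j) ∈ IFun f, x ⟨(i, j), h⟩ ≠ 0}.Finite}
  zero_mem' := by
    have h : {i : ℕ | ∃ j : ℕ, ∃ h : (i, j) ∈ IFun f, (0 : BGrp f) ⟨(i, j), h⟩ ≠ 0} = ∅ := by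
      ext i; simp
    show Set.Finite _
    rw [h]
    exact Set.finite_empty
  add_mem' := by
    intro a b ha hb
    refine Set.Finite.subset (ha.union hb) ?_
    rintro i ⟨j, h, hne⟩
    by_cases h0 : a ⟨(i, j), h⟩ = 0
    · exact Or.inr ⟨j, h, by simpa [h0] using hne⟩
    · exact Or.inl ⟨j, h, h0⟩
  neg_mem' := by
    intro a ha
    refine Set.Finite.subset ha ?_
    rintro i ⟨j, h, hne⟩
    exact ⟨j, h, by simpa using hne⟩

/-- The bonding map `p_{fg} : B_g → B_f` for `f ≤ g`, given by restriction. -/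
def restrictHom (f g : ℕ → ℕ) (h : ∀ i, f i ≤ g i) : BGrp g →+ BGrp f where
  toFun x p := x ⟨p.1, le_trans (p.2 : p.1.2 ≤ f p.1.1) (h p.1.1)⟩
  map_zero' := rfl
  map_add' _ _ := rfl

/-- The inverse limit `lim A`: compatible threads of elements of the `A_f`. -/
def limA : AddSubgroup (∀ f : ℕ → ℕ, BGrp f) where
  carrier := {x | (∀ (f g : ℕ → ℕ) (h : ∀ i, f i ≤ g i), restrictHom f g h (x g) = x f) ∧
    ∀ f, x f ∈ AGrp f}
  zero_mem' := ⟨fun f g h => map_zero _, fun f => (AGrp f).zero_mem⟩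
  add_mem' := by
    rintro a b ⟨ha1, ha2⟩ ⟨hb1, hb2⟩
    refine ⟨fun f g h => ?_, fun f => (AGrp f).add_mem (ha2 f) (hb2 f)⟩
    simp only [Pi.add_apply, map_add, ha1 f g h, hb1 f g h]
  neg_mem' := by
    rintro a ⟨ha1, ha2⟩
    refine ⟨fun f g h => ?_, fun f => (AGrp f).neg_mem (ha2 f)⟩
    simp only [Pi.neg_apply, map_neg, ha1 f g h]

/-- `⊕_{i∈ℕ} ∏_{j∈ℕ} ℤ`: functions `ℕ×ℕ → ℤ` supported on `F × ℕ` for some finite `F`. -/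
def Targ : AddSubgroup (ℕ × ℕ → ℤ) where
  carrier := {φ | {i : ℕ | ∃ j : ℕ, φ (i, j) ≠ 0}.Finite}
  zero_mem' := by
    have h : {i : ℕ | ∃ j : ℕ, (0 : ℕ × ℕ → ℤ) (i, j) ≠ 0} = ∅ := by
      ext i; simp
    show Set.Finite _
    rw [h]
    exact Set.finite_empty
  add_mem' := by
    intro a b ha hb
    refine Set.Finite.subset (ha.union hb) ?_
    rintro i ⟨j, hne⟩
    by_cases h0 : a (i, j) = 0
    · exact Or.inr ⟨j, by simpa [h0] using hne⟩
    · exact Or.inl ⟨j, h0⟩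
  neg_mem' := by
    intro a ha
    refine Set.Finite.subset ha ?_
    rintro i ⟨j, hne⟩
    exact ⟨j, by simpa using hne⟩

/-!
A thread `x` of `lim A` takes the same value at `(i, j)` in every `A_f` with `j ≤ f i`
(compare both with `A_{f ⊔ g}`), so it is a single function `ℕ × ℕ → ℤ`. That function has
only finitely many nonzero rows: choosing a nonzero column `f i` in each nonzero row `i`,
every nonzero row is a nonzero row of `x_f ∈ A_f`. Conversely every element of
`⊕_i ∏_j ℤ` restricts to a thread.
-/

namespace limA

lemma apply_eq (x : limA) {f g : ℕ → ℕ} {p : ℕ × ℕ} (hf : p ∈ IFun f) (hg : p ∈ IFun g) :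
    x.1 f ⟨p, hf⟩ = x.1 g ⟨p, hg⟩ :=
  (congrFun (x.2.1 f (f ⊔ g) fun _ => le_sup_left) ⟨p, hf⟩).symm.trans
    (congrFun (x.2.1 g (f ⊔ g) fun _ => le_sup_right) ⟨p, hg⟩)

def coeff (x : limA) (p : ℕ × ℕ) : ℤ :=
  x.1 (fun _ => p.2) ⟨p, le_refl p.2⟩

lemma apply_eq_coeff (x : limA) (f : ℕ → ℕ) (p : ℕ × ℕ) (hp : p ∈ IFun f) :
    x.1 f ⟨p, hp⟩ = coeff x p :=
  apply_eq x (g := fun _ => p.2) hp (le_refl p.2)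

lemma coeff_mem_targ (x : limA) : coeff x ∈ Targ := by
  obtain ⟨f, hf⟩ : ∃ f : ℕ → ℕ, ∀ i j, coeff x (i, j) ≠ 0 → coeff x (i, f i) ≠ 0 :=
    ⟨fun i => Classical.epsilon fun j => coeff x (i, j) ≠ 0, fun i j h =>
      Classical.epsilon_spec (p := fun j => coeff x (i, j) ≠ 0) ⟨j, h⟩⟩
  exact (x.2.2 f).subset fun i ⟨j, hj⟩ =>
    ⟨f i, le_refl (f i), ne_of_eq_of_ne (apply_eq_coeff x f (i, f i) _) (hf i j hj)⟩

def ofTarg (φ : Targ) : limA :=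
  ⟨fun _ q => φ.1 q.1, fun _ _ _ => rfl, fun _ => φ.2.subset fun _ ⟨j, _, hj⟩ => ⟨j, hj⟩⟩

def equivTarg : limA ≃+ Targ where
  toFun x := ⟨coeff x, coeff_mem_targ x⟩
  invFun := ofTarg
  left_inv x := Subtype.ext <| funext fun f => funext fun q =>
    (apply_eq_coeff x f q.1 q.2).symm
  right_inv _ := rfl
  map_add' _ _ := rfl

end limA

/-- `lim A ≅ ⊕_{i∈ℕ} ∏_{j∈ℕ} ℤ` as abelian groups. -/
theorem limA_iso_sum_of_prods : Nonempty (limA ≃+ Targ) :=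
  ⟨limA.equivTarg⟩
end

section
/- The quotient map lim B → lim(B/A) is surjective (i.e. lim^1 A = 0) if and only if every coherent family of functions Φ = {φ_f : f ∈ ℕ^ℕ} is trivial. -/
lemma restrict_maps_A (f g : ℕ → ℕ) (h : ∀ i, f i ≤ g i) :
    AGrp g ≤ (AGrp f).comap (restrictHom f g h) := by
  intro x hx
  refine Set.Finite.subset hx ?_
  rintro i ⟨j, hj, hne⟩
  exact ⟨j, le_trans (hj : j ≤ f i) (h i), hne⟩

/-- The induced bonding map of the quotient system `B/A`. -/
def qmap (f g : ℕ → ℕ) (h : ∀ i, f i ≤ g i) :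
    BGrp g ⧸ AGrp g →+ BGrp f ⧸ AGrp f :=
  QuotientAddGroup.map _ _ (restrictHom f g h) (restrict_maps_A f g h)


lemma finite_pairs_of_finite_fst {f : ℕ → ℕ} {S : Set (ℕ × ℕ)}
    (hS : S ⊆ IFun f) (h : (Prod.fst '' S).Finite) : S.Finite := by
  have hsub : S ⊆ ⋃ i ∈ Prod.fst '' S, {i} ×ˢ Set.Iic (f i) := by
    rintro ⟨i, j⟩ hp
    refine Set.mem_biUnion ⟨⟨i, j⟩, hp, rfl⟩ ?_
    exact ⟨rfl, hS hp⟩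
  exact Set.Finite.subset
    (h.biUnion fun i _ => (Set.finite_singleton i).prod (Set.finite_Iic _)) hsub

lemma mem_AGrp_iff {f : ℕ → ℕ} (x : BGrp f) :
    x ∈ AGrp f ↔ {p : ℕ × ℕ | ∃ h : p ∈ IFun f, x ⟨p, h⟩ ≠ 0}.Finite := by
  constructor
  · intro hx
    apply finite_pairs_of_finite_fst (f := f)
    · rintro p ⟨h, _⟩; exact h
    · refine Set.Finite.subset hx ?_
      rintro i ⟨⟨a, b⟩, ⟨h, hne⟩, rfl⟩
      exact ⟨b, h, hne⟩
  · intro h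
    refine Set.Finite.subset (h.image Prod.fst) ?_
    rintro i ⟨j, hj, hne⟩
    exact ⟨(i, j), ⟨hj, hne⟩, rfl⟩

lemma mk_eq_mk_iff_pairs {f : ℕ → ℕ} (a b : BGrp f) :
    (QuotientAddGroup.mk a : BGrp f ⧸ AGrp f) = QuotientAddGroup.mk b ↔
      {p : ℕ × ℕ | ∃ h : p ∈ IFun f, a ⟨p, h⟩ ≠ b ⟨p, h⟩}.Finite := by
  rw [QuotientAddGroup.eq, mem_AGrp_iff]
  have hset : {p : ℕ × ℕ | ∃ h : p ∈ IFun f, (-a + b) ⟨p, h⟩ ≠ 0} =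
      {p : ℕ × ℕ | ∃ h : p ∈ IFun f, a ⟨p, h⟩ ≠ b ⟨p, h⟩} := by
    ext p
    constructor <;> rintro ⟨hp, hne⟩ <;> refine ⟨hp, fun e => hne ?_⟩
    · exact neg_add_eq_zero.mpr e
    · exact neg_add_eq_zero.mp e
  rw [hset]

/-- The map `lim B → lim(B/A)` is surjective if and only if every coherent family
`Φ = {φ_f : f ∈ ℕ^ℕ}` is trivial. -/
theorem limQ_surjective_iff_every_coherent_family_trivial :
    (∀ y : ∀ f : ℕ → ℕ, BGrp f ⧸ AGrp f,
      (∀ (f g : ℕ → ℕ) (h : ∀ i, f i ≤ g i), qmap f g h (y g) = y f) →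
      ∃ x : ∀ f : ℕ → ℕ, BGrp f,
        (∀ (f g : ℕ → ℕ) (h : ∀ i, f i ≤ g i), restrictHom f g h (x g) = x f) ∧
        ∀ f, (QuotientAddGroup.mk (x f) : BGrp f ⧸ AGrp f) = y f) ↔
    (∀ Φ : (ℕ → ℕ) → ℕ × ℕ → ℤ,
      (∀ f g : ℕ → ℕ, {p | p ∈ IFun f ∩ IFun g ∧ Φ f p ≠ Φ g p}.Finite) →
      ∃ φ : ℕ × ℕ → ℤ, ∀ f : ℕ → ℕ, {p | p ∈ IFun f ∧ φ p ≠ Φ f p}.Finite) := by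
  constructor
  · -- surjectivity implies every coherent family is trivial
    intro hsurj Φ hcoh
    set y : ∀ f : ℕ → ℕ, BGrp f ⧸ AGrp f :=
      fun f => QuotientAddGroup.mk (fun p : IFun f => Φ f p.1) with hy
    have hthread : ∀ (f g : ℕ → ℕ) (h : ∀ i, f i ≤ g i), qmap f g h (y g) = y f := by
      intro f g h
      show qmap f g h (QuotientAddGroup.mk _) = _
      rw [hy]
      show QuotientAddGroup.mk (restrictHom f g h (fun p : IFun g => Φ g p.1)) = _
      rw [mk_eq_mk_iff_pairs]
      refine Set.Finite.subset (hcoh g f) ?_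
      rintro p ⟨hp, hne⟩
      exact ⟨⟨le_trans hp (h p.1), hp⟩, fun e => hne (by simpa [restrictHom] using e.symm ▸ rfl)⟩
    obtain ⟨x, hxcomp, hxmk⟩ := hsurj y hthread
    refine ⟨fun p => x (fun _ => p.2) ⟨p, show p.2 ≤ p.2 from le_refl _⟩,
        fun f => ?_⟩
    have key : ∀ p : ℕ × ℕ, ∀ hp : p ∈ IFun f,
        x (fun _ => p.2) ⟨p, show p.2 ≤ p.2 from le_refl _⟩ = x f ⟨p, hp⟩ := by
      intro p hp
      set g : ℕ → ℕ := fun n => max (f n) p.2 with hg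
      have h1 : ∀ i, f i ≤ g i := fun i => le_max_left _ _
      have h2 : ∀ i, (fun _ => p.2) i ≤ g i := fun i => le_max_right _ _
      have e1 := congrFun (hxcomp f g h1) ⟨p, hp⟩
      have e2 := congrFun (hxcomp (fun _ => p.2) g h2)
        ⟨p, show p.2 ≤ p.2 from le_refl _⟩
      exact e2.symm.trans e1
    have hfin : {p : ℕ × ℕ | ∃ h : p ∈ IFun f,
        x f ⟨p, h⟩ ≠ (fun q : IFun f => Φ f q.1) ⟨p, h⟩}.Finite :=
      (mk_eq_mk_iff_pairs (x f) (fun q : IFun f => Φ f q.1)).mp (hxmk f)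
    refine Set.Finite.subset hfin ?_
    rintro p ⟨hp, hne⟩
    exact ⟨hp, by rw [← key p hp]; exact hne⟩
  · -- every coherent family trivial implies surjectivity
    intro htriv y hy
    choose b hb using fun f => QuotientAddGroup.mk_surjective (y f)
    set Φ : (ℕ → ℕ) → ℕ × ℕ → ℤ :=
      fun f p => if h : p.2 ≤ f p.1 then b f ⟨p, h⟩ else 0 with hΦ
    have hcoh : ∀ f g : ℕ → ℕ, {p | p ∈ IFun f ∩ IFun g ∧ Φ f p ≠ Φ g p}.Finite := by
      intro f g
      set m : ℕ → ℕ := fun n => max (f n) (g n) with hm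
      have h1 : ∀ i, f i ≤ m i := fun i => le_max_left _ _
      have h2 : ∀ i, g i ≤ m i := fun i => le_max_right _ _
      have key : ∀ (f' : ℕ → ℕ) (h' : ∀ i, f' i ≤ m i),
          {p : ℕ × ℕ | ∃ hp : p ∈ IFun f',
            b f' ⟨p, hp⟩ ≠ b m ⟨p, le_trans hp (h' p.1)⟩}.Finite := by
        intro f' h'
        have := hy f' m h'
        rw [← hb m, ← hb f'] at this
        have : (QuotientAddGroup.mk (restrictHom f' m h' (b m)) :
            BGrp f' ⧸ AGrp f') = QuotientAddGroup.mk (b f') := this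
        rw [mk_eq_mk_iff_pairs] at this
        refine Set.Finite.subset this ?_
        rintro p ⟨hp, hne⟩
        exact ⟨hp, fun e => hne (by simpa [restrictHom] using e.symm)⟩
      refine Set.Finite.subset ((key f h1).union (key g h2)) ?_
      rintro p ⟨⟨hpf, hpg⟩, hne⟩
      simp only [hΦ] at hne
      rw [dif_pos (show p.2 ≤ f p.1 from hpf), dif_pos (show p.2 ≤ g p.1 from hpg)] at hne
      by_cases hbf : b f ⟨p, hpf⟩ = b m ⟨p, le_trans hpf (h1 p.1)⟩
      · refine Or.inr ⟨hpg, fun e => hne ?_⟩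
        rw [hbf, e]
      · exact Or.inl ⟨hpf, hbf⟩
    obtain ⟨φ, hφ⟩ := htriv Φ hcoh
    refine ⟨fun f => fun p : IFun f => φ p.1, fun f g h => rfl, fun f => ?_⟩
    rw [← hb f, mk_eq_mk_iff_pairs]
    refine Set.Finite.subset (hφ f) ?_
    rintro p ⟨hp, hne⟩
    exact ⟨hp, by simp only [hΦ]; rw [dif_pos (show p.2 ≤ f p.1 from hp)]; exact hne⟩
end

section
/- Let κ have uncountable cofinality. If φ and ψ are two stacked functions κ×ω → ℤ arising from stacks for the same coherent family Φ = {φ_f : f ∈ ω^κ}, then there exists δ < κ such that φ(α,i) = ψ(α,i) for all α > δ and all i. -/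
/-- `I_f = {(α,i) : i ≤ f(α)}` for `f ∈ ω^κ`. -/
def IK {K : Type} (f : K → ℕ) : Set (K × ℕ) := {x | x.2 ≤ f x.1}

/-- `φ` is a stacked function for the family `Φ`: there is a stack
`⟨f_j : j < ω⟩` (so `⋃_j I_{f_j} = κ × ω`) with `φ(x) = φ_{f_k}(x)` where
`k` is least with `x ∈ I_{f_k}`. -/
def IsStacked {K : Type} (Φ : (K → ℕ) → K × ℕ → ℤ) (φ : K × ℕ → ℤ) : Prop :=
  ∃ F : ℕ → K → ℕ, ∀ x : K × ℕ, ∃ hx : ∃ j, x.2 ≤ F j x.1,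
    φ x = Φ (F (Nat.find hx)) x

/-!
Where two stacked functions disagree, they read off `Φ (F j)` and `Φ (G k)` for some pair of
stack levels `(j, k)` at a common point of `I_{F j} ∩ I_{G k}`. By coherence each pair contributes
only finitely many such points, so the disagreement set is countable, and so is its projection
to `κ`; uncountable cofinality then bounds that projection below some `δ`.
-/

open Cardinal

theorem Set.Countable.exists_forall_lt_of_aleph0_lt_cof {α : Type*} [LinearOrder α]
    (hα : ℵ₀ < Order.cof α) {s : Set α} (hs : s.Countable) : ∃ δ, ∀ a ∈ s, a < δ :=
  not_isCofinal_iff.1 fun hcof => ((Order.cof_le hcof).trans hs.le_aleph0).not_gt hα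

namespace IsStacked

variable {K : Type} {Φ : (K → ℕ) → K × ℕ → ℤ} {φ ψ : K × ℕ → ℤ}

theorem exists_stack (hφ : IsStacked Φ φ) :
    ∃ F : ℕ → K → ℕ, ∀ x, ∃ j, x ∈ IK (F j) ∧ φ x = Φ (F j) x := by
  obtain ⟨F, hF⟩ := hφ
  refine ⟨F, fun x => ?_⟩
  obtain ⟨hx, hφx⟩ := hF x
  exact ⟨Nat.find hx, Nat.find_spec hx, hφx⟩

theorem countable_ne
    (hcoh : ∀ f g : K → ℕ, {x | x ∈ IK f ∩ IK g ∧ Φ f x ≠ Φ g x}.Countable)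
    (hφ : IsStacked Φ φ) (hψ : IsStacked Φ ψ) : {x | φ x ≠ ψ x}.Countable := by
  obtain ⟨F, hF⟩ := hφ.exists_stack
  obtain ⟨G, hG⟩ := hψ.exists_stack
  refine (Set.countable_iUnion fun jk : ℕ × ℕ => hcoh (F jk.1) (G jk.2)).mono fun x hx => ?_
  obtain ⟨j, hxF, hφx⟩ := hF x
  obtain ⟨k, hxG, hψx⟩ := hG x
  exact Set.mem_iUnion.2 ⟨(j, k), ⟨hxF, hxG⟩, hφx ▸ hψx ▸ hx⟩

end IsStacked

/-- Any two stacked functions for a coherent family over `κ` of uncountable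
cofinality agree above some `δ < κ`. -/
theorem stacked_functions_eventually_agree
    (K : Type) [LinearOrder K] [WellFoundedLT K]
    (hcof : Cardinal.aleph0 < (Ordinal.type ((· < ·) : K → K → Prop)).cof)
    (Φ : (K → ℕ) → K × ℕ → ℤ)
    (hcoh : ∀ f g : K → ℕ, {x | x ∈ IK f ∩ IK g ∧ Φ f x ≠ Φ g x}.Finite)
    (φ ψ : K × ℕ → ℤ) (hφ : IsStacked Φ φ) (hψ : IsStacked Φ ψ) :
    ∃ δ : K, ∀ α : K, δ < α → ∀ i : ℕ, φ (α, i) = ψ (α, i) := by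
  rw [Ordinal.cof_type] at hcof
  have hne : {x | φ x ≠ ψ x}.Countable :=
    hφ.countable_ne (fun f g => (hcoh f g).countable) hψ
  obtain ⟨δ, hδ⟩ := (hne.image Prod.fst).exists_forall_lt_of_aleph0_lt_cof hcof
  refine ⟨δ, fun α hα i => ?_⟩
  by_contra hφψ
  exact (hδ α ⟨(α, i), hφψ, rfl⟩).not_gt hα
end

section
/- Let Φ = {φ_f : f ∈ ω^κ} be a coherent family with κ of countable cofinality witnessed by an increasing sequence β_0 = 0 < β_1 < …, and suppose for each j a function φ_j : [β_j, β_{j+1}) × ω → ℤ trivializes Φ restricted to [β_j, β_{j+1}). Let φ be their amalgamation. Then for every f ∈ ω^κ, the set e(φ_f, φ) = {α : φ_f(α,i) ≠ φ(α,i) for some i with (α,i) ∈ I_f} is countable. -/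
theorem exists_mem_Ico_succ {K : Type*} [LinearOrder K] (β : ℕ → K) {α : K} (h0 : β 0 ≤ α)
    (h : ∃ j, α < β j) : ∃ j, α ∈ Set.Ico (β j) (β (j + 1)) := by
  classical
  obtain ⟨m, hm⟩ : ∃ m, Nat.find h = m + 1 :=
    Nat.exists_eq_succ_of_ne_zero fun h' => (h' ▸ Nat.find_spec h).not_ge h0
  exact ⟨m, not_lt.1 (Nat.find_min h (by omega)), hm ▸ Nat.find_spec h⟩

theorem amalgamation_error_countable_general
    (K : Type) [LinearOrder K]
    (β : ℕ → K) (hβ0 : ∀ α : K, β 0 ≤ α)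
    (hcofinal : ∀ α : K, ∃ j : ℕ, α < β j)
    (Φ : (K → ℕ) → K × ℕ → ℤ)
    (φj : ℕ → K × ℕ → ℤ)
    (htriv : ∀ (j : ℕ) (f : K → ℕ),
      {x | x ∈ IK f ∧ x.1 ∈ Set.Ico (β j) (β (j + 1)) ∧ Φ f x ≠ φj j x}.Finite)
    (φ : K × ℕ → ℤ)
    (hφ : ∀ (j : ℕ) (x : K × ℕ), x.1 ∈ Set.Ico (β j) (β (j + 1)) → φ x = φj j x) :
    ∀ f : K → ℕ, {α : K | ∃ i : ℕ, (α, i) ∈ IK f ∧ Φ f (α, i) ≠ φ (α, i)}.Countable := by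
  intro f
  refine (Set.countable_iUnion fun j => ((htriv j f).image Prod.fst).countable).mono ?_
  rintro α ⟨i, hi, hne⟩
  obtain ⟨j, hj⟩ := exists_mem_Ico_succ β (hβ0 α) (hcofinal α)
  exact Set.mem_iUnion.2 ⟨j, (α, i), ⟨hi, hj, hφ j (α, i) hj ▸ hne⟩, rfl⟩

/-- Let `κ` have countable cofinality, witnessed by `β_0 = 0 < β_1 < …` cofinal,
let `Φ` be coherent, let each `φ_j` trivialize `Φ ↾ [β_j, β_{j+1})`, and let `φ`
be their amalgamation. Then for every `f`, the set
`e(φ_f, φ) = {α : φ_f(α,i) ≠ φ(α,i) for some i with (α,i) ∈ I_f}` is countable. -/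
theorem amalgamation_error_countable
    (K : Type) [LinearOrder K]
    (β : ℕ → K) (hβ0 : ∀ α : K, β 0 ≤ α) (hmono : StrictMono β)
    (hcofinal : ∀ α : K, ∃ j : ℕ, α < β j)
    (Φ : (K → ℕ) → K × ℕ → ℤ)
    (hcoh : ∀ f g : K → ℕ, {x | x ∈ IK f ∩ IK g ∧ Φ f x ≠ Φ g x}.Finite)
    (φj : ℕ → K × ℕ → ℤ)
    (htriv : ∀ (j : ℕ) (f : K → ℕ),
      {x | x ∈ IK f ∧ x.1 ∈ Set.Ico (β j) (β (j + 1)) ∧ Φ f x ≠ φj j x}.Finite)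
    (φ : K × ℕ → ℤ)
    (hφ : ∀ (j : ℕ) (x : K × ℕ), x.1 ∈ Set.Ico (β j) (β (j + 1)) → φ x = φj j x) :
    ∀ f : K → ℕ, {α : K | ∃ i : ℕ, (α, i) ∈ IK f ∧ Φ f (α, i) ≠ φ (α, i)}.Countable :=
  amalgamation_error_countable_general K β hβ0 hcofinal Φ φj htriv φ hφ
end

section
/- Let κ be an infinite cardinal, Φ = {φ_f : f ∈ ω^κ} a coherent family, x ⊆ κ, and φ : κ×ω → ℤ a function such that for every f with φ_f ≠* φ ↾ I_f there is a finite set F_f ⊆ κ with e(φ_f, φ) ⊆ x ∪ F_f and with only finitely many (α,i) ∈ I_f such that α ∈ F_f \ x and φ_f(α,i) ≠ φ(α,i), where e(φ_f,φ) = {α : ∃i, (α,i) ∈ I_f and φ_f(α,i) ≠ φ(α,i)}. Suppose ψ : x×ω → ℤ trivializes Φ restricted to x. Then φ' defined by φ'(α,i) = ψ(α,i) if α ∈ x and φ(α,i) otherwise, trivializes Φ. -/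
/-- Let `Φ` be a coherent family over an infinite `κ`, `x ⊆ κ`, and `φ` such
that for every `f` with infinitely many disagreements with `φ`, all but finitely
many disagreement points lie in `x × ω`. If `ψ` trivializes `Φ ↾ x`, then the
function `φ'` equal to `ψ` on `x × ω` and to `φ` elsewhere trivializes `Φ`. -/
theorem patched_function_trivializes
    (K : Type) [Infinite K]
    (Φ : (K → ℕ) → K × ℕ → ℤ)
    (hcoh : ∀ f g : K → ℕ, {p | p ∈ IK f ∩ IK g ∧ Φ f p ≠ Φ g p}.Finite)
    (x : Set K) (φ ψ φ' : K × ℕ → ℤ)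
    (hψ : ∀ f : K → ℕ, {p | p ∈ IK f ∧ p.1 ∈ x ∧ Φ f p ≠ ψ p}.Finite)
    (herr : ∀ f : K → ℕ, {p | p ∈ IK f ∧ Φ f p ≠ φ p}.Infinite →
      {p | p ∈ IK f ∧ Φ f p ≠ φ p ∧ p.1 ∉ x}.Finite)
    (hφ'1 : ∀ p : K × ℕ, p.1 ∈ x → φ' p = ψ p)
    (hφ'2 : ∀ p : K × ℕ, p.1 ∉ x → φ' p = φ p) :
    ∀ f : K → ℕ, {p | p ∈ IK f ∧ φ' p ≠ Φ f p}.Finite := by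
  intro f
  have h2 : {p | p ∈ IK f ∧ Φ f p ≠ φ p ∧ p.1 ∉ x}.Finite := by
    by_cases h : {p | p ∈ IK f ∧ Φ f p ≠ φ p}.Infinite
    · exact herr f h
    · exact (Set.not_infinite.mp h).subset (fun p hp => ⟨hp.1, hp.2.1⟩)
  apply ((hψ f).union h2).subset
  intro p hp
  by_cases hx : p.1 ∈ x
  · exact Or.inl ⟨hp.1, hx, fun h => hp.2 (by rw [hφ'1 p hx, h])⟩
  · exact Or.inr ⟨hp.1, fun h => hp.2 (by rw [hφ'2 p hx, ← h]), hx⟩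
end
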